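/- arXiv:1105.2471 — 4 statements merged into one kernel-verified Lean document; each statement's English description precedes it below -/
import Mathlib

section
/- In the free product G' = Z₂ * Z₂ * Z₂, if a, b, c are generators of the three Z₂ factors, then the subgroup generated by a, bab⁻¹ and cac⁻¹ is isomorphic to the free product Z₂ * Z₂ * Z₂. -/
/-- The free product `Z₂ * Z₂ * Z₂`. -/
abbrev Z2Z2Z2 : Type := Monoid.CoprodI (fun _ : Fin 3 => Multiplicative (ZMod 2))

/-- Generators of the three `Z₂` factors. -/
def z2gen (i : Fin 3) : Z2Z2Z2 :=
  Monoid.CoprodI.of (i := i) (Multiplicative.ofAdd (1 : ZMod 2))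

/-!
The subgroup is the image of the homomorphism `Z₂ * Z₂ * Z₂ → G'` sending the `i`-th generator
to `xᵢ a xᵢ⁻¹`, where `(x₀, x₁, x₂) = (a, b, c)`. It is injective by the ping-pong lemma for the
action of `G'` on its reduced words, with `Xᵢ` the words whose first letter lies in the `i`-th
factor: if `w ∉ Xᵢ`, no cancellation occurs in `xᵢ a xᵢ⁻¹ w` (which is `a w` for `i = 0`), so
it lies in `Xᵢ`.
-/

open scoped Cardinal

namespace Monoid.CoprodI

variable {ι : Type*} {G : ι → Type*}

theorem Word.fstIdx_of_smul [DecidableEq ι] [∀ i, Monoid (G i)] [∀ i, DecidableEq (G i)]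
    {i : ι} {m : G i} (hm : m ≠ 1) {w : Word G} (hw : w.fstIdx ≠ some i) :
    (of m • w).fstIdx = some i := by
  rw [← Word.cons_eq_smul (h1 := hw) (h2 := hm)]
  exact Word.fstIdx_cons m w hw hm

variable [∀ i, Group (G i)]

theorem Word.fstIdx_conj_of_smul [DecidableEq ι] [∀ i, DecidableEq (G i)] {i k : ι}
    {s : G i} (hs : s ≠ 1) {h : G k} (hh : h ≠ 1) {w : Word G} (hw : w.fstIdx ≠ some i) :
    ((of s * of h * (of s)⁻¹) • w).fstIdx = some i := by
  obtain rfl | hik := eq_or_ne i k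
  · rw [← map_mul, ← map_inv, ← map_mul]
    exact fstIdx_of_smul (conj_eq_one_iff.not.mpr hh) hw
  have h₁ : (of s⁻¹ • w).fstIdx = some i := fstIdx_of_smul (inv_ne_one.mpr hs) hw
  have h₂ : (of h • of s⁻¹ • w).fstIdx = some k :=
    fstIdx_of_smul hh (by rw [h₁]; exact Option.some_injective _ |>.ne hik)
  rw [← map_inv, mul_smul, mul_smul]
  exact fstIdx_of_smul hs (by rw [h₂]; exact Option.some_injective _ |>.ne hik.symm)

def conjLift (i₀ : ι) (s : ∀ i, G i) : CoprodI (fun _ : ι => G i₀) →* CoprodI G :=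
  lift fun i => (MulAut.conj (of (s i))).toMonoidHom.comp of

theorem conjLift_injective (i₀ : ι) (s : ∀ i, G i) (hs : ∀ i, s i ≠ 1)
    (hcard : 3 ≤ #ι) : Function.Injective (conjLift i₀ s) := by
  classical
  have : Nontrivial ι :=
    Cardinal.one_lt_iff_nontrivial.mp (by exact_mod_cast hcard.trans_lt' (by norm_num))
  let X : ι → Set (Word G) := fun i => {w | w.fstIdx = some i}
  refine lift_injective_of_ping_pong _ (.inl hcard) X (fun i => ?_) (fun i j hij => ?_)
    (fun i j hij h hh => ?_)
  · exact ⟨of (s i) • Word.empty, Word.fstIdx_of_smul (hs i) (by simp [Word.fstIdx, Word.empty])⟩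
  · exact Set.disjoint_left.mpr fun w hi hj => hij (Option.some_injective _ (hi.symm.trans hj))
  · rintro _ ⟨w, hw, rfl⟩
    exact Word.fstIdx_conj_of_smul (hs i) hh
      (by rw [hw]; exact Option.some_injective _ |>.ne hij.symm)

theorem range_lift_eq_closure {H : Type*} [Group H] (φ : ∀ i, G i →* H) (x : ∀ i, G i)
    (hx : ∀ i, Subgroup.closure {x i} = ⊤) :
    (lift φ).range = Subgroup.closure (Set.range fun i => φ i (x i)) := by
  rw [range_eq_iSup, ← Set.iUnion_singleton_eq_range, Subgroup.closure_iUnion]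
  refine iSup_congr fun i => ?_
  rw [MonoidHom.range_eq_map, ← hx, MonoidHom.map_closure, Set.image_singleton]

theorem range_conjLift (i₀ : ι) (s : ∀ i, G i) {x : G i₀} (hx : Subgroup.closure {x} = ⊤) :
    (conjLift i₀ s).range =
      Subgroup.closure (Set.range fun i => of (s i) * of x * (of (s i))⁻¹) :=
  range_lift_eq_closure _ (fun _ => x) fun _ => hx

end Monoid.CoprodI

theorem closure_ofAdd_one_zmod (n : ℕ) :
    Subgroup.closure {Multiplicative.ofAdd (1 : ZMod n)} = ⊤ :=
  (Subgroup.eq_top_iff' _).mpr fun x => by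
    rw [← Subgroup.zpowers_eq_closure, Subgroup.mem_zpowers_iff]
    exact ⟨x.toAdd.cast, by rw [← ofAdd_zsmul, zsmul_one, ZMod.intCast_zmod_cast]; rfl⟩

/-- In `Z₂ * Z₂ * Z₂ = ⟨a, b, c⟩`, the subgroup generated by `a`, `bab⁻¹` and
`cac⁻¹` is isomorphic to `Z₂ * Z₂ * Z₂`. -/
theorem subgroup_closure_conj_invol_iso :
    Nonempty
      ((Subgroup.closure {z2gen 0, z2gen 1 * z2gen 0 * (z2gen 1)⁻¹,
        z2gen 2 * z2gen 0 * (z2gen 2)⁻¹} : Subgroup Z2Z2Z2) ≃* Z2Z2Z2) := by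
  let φ := Monoid.CoprodI.conjLift (G := fun _ : Fin 3 => Multiplicative (ZMod 2)) 0
    fun _ => .ofAdd 1
  have hφ : Function.Injective φ :=
    Monoid.CoprodI.conjLift_injective _ _ (fun _ => by decide) (by simp)
  have hrange : φ.range = Subgroup.closure {z2gen 0, z2gen 1 * z2gen 0 * (z2gen 1)⁻¹,
      z2gen 2 * z2gen 0 * (z2gen 2)⁻¹} := by
    rw [Monoid.CoprodI.range_conjLift _ _ (closure_ofAdd_one_zmod 2)]
    congr 1
    change Set.range (fun i => z2gen i * z2gen 0 * (z2gen i)⁻¹) = _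
    ext y
    simp [Fin.exists_fin_succ, eq_comm]
  exact ⟨(MulEquiv.subgroupCongr hrange.symm).trans (MonoidHom.ofInjective hφ).symm⟩
end

section
/- In G' = Z₂ * (Z₂ × Z₂) = ⟨a, b, c | a² = b² = c² = (bc)² = 1⟩, if H₁' and H₂' are subgroups with acac ∈ H₁' and (acac)⁻¹(ab)(acac), acababa, abcac ∈ H₂', then H₁'H₂' = G'. -/
open Pointwise

/-!
The three words already generate the whole group, so `H₂' = G'`. Using only `a² = b² = c² = 1`
they produce `cac`, `ab` and `aca`; conjugating `aca` by `ab` gives `c` because `bc = cb`,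
and then `a = c (cac) c` and `b = a (ab)`.
-/

section Involutions

variable {G : Type*} [Group G] {a b c : G}

theorem Subgroup.involutions_mem_of_words_mem (K : Subgroup G) (ha : a * a = 1)
    (hb : b * b = 1) (hc : c * c = 1) (hbc : b * c = c * b)
    (h₁ : (a * c * a * c)⁻¹ * (a * b) * (a * c * a * c) ∈ K)
    (h₂ : a * c * a * b * a * b * a ∈ K) (h₃ : a * b * c * a * c ∈ K) :
    a ∈ K ∧ b ∈ K ∧ c ∈ K := by
  have ha' x : a * (a * x) = x := by rw [← mul_assoc, ha, one_mul]
  have hb' x : b * (b * x) = x := by rw [← mul_assoc, hb, one_mul]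
  have hc' x : c * (c * x) = x := by rw [← mul_assoc, hc, one_mul]
  have hbcb : b * (c * b) = c := by rw [← mul_assoc, hbc, mul_assoc, hb, mul_one]
  simp only [mul_inv_rev, inv_eq_of_mul_eq_one_right ha, inv_eq_of_mul_eq_one_right hc]
    at h₁
  have hcac : c * a * c ∈ K := by
    simpa only [mul_assoc, ha, hb, hc, ha', hb', hc', mul_one] using mul_mem h₃ h₁
  have hab : a * b ∈ K := by
    simpa only [mul_assoc, ha, hc, ha', hc', mul_one] using mul_mem h₃ hcac
  have haca : a * c * a ∈ K := by
    simpa only [mul_assoc, ha, hb, ha', hb', mul_one] using mul_mem (mul_mem h₂ hab) hab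
  have hc_mem : c ∈ K := by
    simpa only [mul_inv_rev, inv_eq_of_mul_eq_one_right ha, inv_eq_of_mul_eq_one_right hb,
      mul_assoc, ha', hbcb] using mul_mem (mul_mem (inv_mem hab) haca) hab
  have ha_mem : a ∈ K := by
    simpa only [mul_assoc, hc, hc', mul_one] using mul_mem (mul_mem hc_mem hcac) hc_mem
  have hb_mem : b ∈ K := by simpa only [← mul_assoc, ha, one_mul] using mul_mem ha_mem hab
  exact ⟨ha_mem, hb_mem, hc_mem⟩

end Involutions

theorem Multiplicative.zmod_two_eq_one_or_eq_ofAdd_one (m : Multiplicative (ZMod 2)) :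
    m = 1 ∨ m = Multiplicative.ofAdd 1 := by
  revert m; decide

theorem MonoidHom.apply_mem_of_apply_ofAdd_one_mem {G : Type*} [Group G] {K : Subgroup G}
    (f : Multiplicative (ZMod 2) →* G) (hf : f (Multiplicative.ofAdd 1) ∈ K)
    (m : Multiplicative (ZMod 2)) : f m ∈ K := by
  rcases m.zmod_two_eq_one_or_eq_ofAdd_one with rfl | rfl
  · exact (map_one f).symm ▸ K.one_mem
  · exact hf

theorem Monoid.Coprod.subgroup_eq_top_of_forall_mem {G H : Type*} [Group G] [Group H]
    (K : Subgroup (Monoid.Coprod G H)) (hG : ∀ g, Monoid.Coprod.inl g ∈ K)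
    (hH : ∀ h, Monoid.Coprod.inr h ∈ K) : K = ⊤ := by
  rw [eq_top_iff, ← Monoid.Coprod.range_inl_sup_range_inr, sup_le_iff]
  exact ⟨by rintro _ ⟨g, rfl⟩; exact hG g, by rintro _ ⟨h, rfl⟩; exact hH h⟩

theorem Monoid.Coprod.subgroup_eq_top_of_generators_mem
    (K : Subgroup (Monoid.Coprod (Multiplicative (ZMod 2))
      (Multiplicative (ZMod 2) × Multiplicative (ZMod 2))))
    (ha : Monoid.Coprod.inl (Multiplicative.ofAdd 1) ∈ K)
    (hb : Monoid.Coprod.inr (Multiplicative.ofAdd 1, 1) ∈ K)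
    (hc : Monoid.Coprod.inr (1, Multiplicative.ofAdd 1) ∈ K) : K = ⊤ := by
  refine subgroup_eq_top_of_forall_mem K
    (MonoidHom.apply_mem_of_apply_ofAdd_one_mem (K := K) inl ha) fun ⟨m, n⟩ => ?_
  rw [← Prod.fst_mul_snd (m, n), map_mul]
  exact mul_mem
    (MonoidHom.apply_mem_of_apply_ofAdd_one_mem (K := K) (inr.comp (MonoidHom.inl _ _)) hb m)
    (MonoidHom.apply_mem_of_apply_ofAdd_one_mem (K := K) (inr.comp (MonoidHom.inr _ _)) hc n)

theorem product_eq_univ_Z2_Z2xZ2_general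
    (H₁ H₂ : Subgroup (Monoid.Coprod (Multiplicative (ZMod 2))
      (Multiplicative (ZMod 2) × Multiplicative (ZMod 2))))
    (a b c : Monoid.Coprod (Multiplicative (ZMod 2))
      (Multiplicative (ZMod 2) × Multiplicative (ZMod 2)))
    (ha : a = Monoid.Coprod.inl (Multiplicative.ofAdd (1 : ZMod 2)))
    (hb : b = Monoid.Coprod.inr (Multiplicative.ofAdd (1 : ZMod 2), 1))
    (hc : c = Monoid.Coprod.inr (1, Multiplicative.ofAdd (1 : ZMod 2)))
    (h2 : (a * c * a * c)⁻¹ * (a * b) * (a * c * a * c) ∈ H₂)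
    (h2' : a * c * a * b * a * b * a ∈ H₂)
    (h2'' : a * b * c * a * c ∈ H₂) :
    (↑H₁ * ↑H₂ : Set (Monoid.Coprod (Multiplicative (ZMod 2)) (Multiplicative (ZMod 2) × Multiplicative (ZMod 2)))) = Set.univ := by
  have haa : a * a = 1 := by rw [ha, ← map_mul, ← map_one Monoid.Coprod.inl]; rfl
  have hbb : b * b = 1 := by rw [hb, ← map_mul, ← map_one Monoid.Coprod.inr]; rfl
  have hcc : c * c = 1 := by rw [hc, ← map_mul, ← map_one Monoid.Coprod.inr]; rfl
  have hbc : b * c = c * b := by rw [hb, hc, ← map_mul, ← map_mul, mul_comm]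
  obtain ⟨ha₂, hb₂, hc₂⟩ :=
    Subgroup.involutions_mem_of_words_mem H₂ haa hbb hcc hbc h2 h2' h2''
  have htop : H₂ = ⊤ :=
    Monoid.Coprod.subgroup_eq_top_of_generators_mem H₂ (ha ▸ ha₂) (hb ▸ hb₂) (hc ▸ hc₂)
  rw [htop, Subgroup.coe_top]
  exact Set.mul_univ_of_one_mem H₁.one_mem

/-- In `G' = Z₂ * (Z₂ × Z₂) = ⟨a, b, c | a² = b² = c² = (bc)² = 1⟩`: if
`acac ∈ H₁'` and `(acac)⁻¹(ab)(acac), acababa, abcac ∈ H₂'`, then `H₁'H₂' = G'`. -/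
theorem product_eq_univ_Z2_Z2xZ2
    (H₁ H₂ : Subgroup (Monoid.Coprod (Multiplicative (ZMod 2))
      (Multiplicative (ZMod 2) × Multiplicative (ZMod 2))))
    (a b c : Monoid.Coprod (Multiplicative (ZMod 2))
      (Multiplicative (ZMod 2) × Multiplicative (ZMod 2)))
    (ha : a = Monoid.Coprod.inl (Multiplicative.ofAdd (1 : ZMod 2)))
    (hb : b = Monoid.Coprod.inr (Multiplicative.ofAdd (1 : ZMod 2), 1))
    (hc : c = Monoid.Coprod.inr (1, Multiplicative.ofAdd (1 : ZMod 2)))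
    (h1 : a * c * a * c ∈ H₁)
    (h2 : (a * c * a * c)⁻¹ * (a * b) * (a * c * a * c) ∈ H₂)
    (h2' : a * c * a * b * a * b * a ∈ H₂)
    (h2'' : a * b * c * a * c ∈ H₂) :
    (↑H₁ * ↑H₂ : Set (Monoid.Coprod (Multiplicative (ZMod 2)) (Multiplicative (ZMod 2) × Multiplicative (ZMod 2)))) = Set.univ :=
  product_eq_univ_Z2_Z2xZ2_general H₁ H₂ a b c ha hb hc h2 h2' h2''
end

section
/- Let G' = Z₂ * (Z₂ × Z₂) = ⟨a, b, c | a² = b² = c² = (bc)² = 1⟩ and let n ≥ 1. Then the quotient of G' by the normal closure of {acac, (ab)^{n+1}} is isomorphic to D_{n+1} × Z₂, where D_{n+1} is the dihedral group of order 2(n+1). -/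
/-- `G' = Z₂ * (Z₂ × Z₂)`. -/
abbrev GZ2xZ2 : Type :=
  Monoid.Coprod (Multiplicative (ZMod 2)) (Multiplicative (ZMod 2) × Multiplicative (ZMod 2))

def gA : GZ2xZ2 := Monoid.Coprod.inl (Multiplicative.ofAdd (1 : ZMod 2))
def gB : GZ2xZ2 := Monoid.Coprod.inr (Multiplicative.ofAdd (1 : ZMod 2), 1)
def gC : GZ2xZ2 := Monoid.Coprod.inr (1, Multiplicative.ofAdd (1 : ZMod 2))

/-!
Adding the relators `acac` and `(ab)^m` turns `G'` into the Coxeter group on three involutions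
`a, b, c` in which `c` commutes with `a` and `b` and `(ab)^m = 1`: the dihedral group generated
by `a, b` times the `Z₂` generated by `c`. Concretely, `a ↦ (sr 0, 1)`, `b ↦ (sr 1, 1)`,
`c ↦ (1, z)` kills both relators; conversely, in the quotient `s = a` and `t = ab` satisfy
`s² = tᵐ = 1` and `sts = t⁻¹` and commute with `c`, which defines a homomorphism back from
`D_m × Z₂`. Both composites fix the generators, so they are inverse to each other.
-/

open Multiplicative DihedralGroup

section

variable {G : Type*} [Group G]

theorem MonoidHom.prod_ext {M N : Type*} [MulOneClass M] [MulOneClass N]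
    {f g : M × N →* G} (hl : f.comp (inl M N) = g.comp (inl M N))
    (hr : f.comp (inr M N) = g.comp (inr M N)) : f = g :=
  MonoidHom.ext fun p => by
    rw [← Prod.fst_mul_snd p, map_mul, map_mul]
    exact congr_arg₂ (· * ·) (DFunLike.congr_fun hl p.1) (DFunLike.congr_fun hr p.2)

theorem MonoidHom.ext_multiplicative_zmod {n : ℕ} {f g : Multiplicative (ZMod n) →* G}
    (h : f (ofAdd 1) = g (ofAdd 1)) : f = g := by
  refine MonoidHom.ext fun x => ?_
  obtain ⟨k, hk⟩ := ZMod.intCast_surjective (toAdd x)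
  have hx : x = ofAdd (1 : ZMod n) ^ k := by rw [← ofAdd_zsmul, zsmul_one, hk, ofAdd_toAdd]
  rw [hx, map_zpow, map_zpow, h]

theorem commute_of_mul_self_eq_one {s u : G} (hs : s * s = 1) (hu : u * u = 1)
    (hsu : s * u * s * u = 1) : Commute s u := by
  have hsu' : (s * u)⁻¹ = s * u := inv_eq_of_mul_eq_one_right (by rwa [← mul_assoc])
  rw [mul_inv_rev, inv_eq_of_mul_eq_one_right hs, inv_eq_of_mul_eq_one_right hu] at hsu'
  exact hsu'.symm

theorem mul_mul_mul_eq_inv_of_mul_self_eq_one {s u : G} (hs : s * s = 1) (hu : u * u = 1) :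
    s * (s * u) * s = (s * u)⁻¹ := by
  rw [mul_inv_rev, inv_eq_of_mul_eq_one_right hs, inv_eq_of_mul_eq_one_right hu,
    ← mul_assoc, hs, one_mul]

section ZModPowers

variable {n : ℕ} (t : G) (ht : t ^ n = 1)

def zmodPowersHom : Multiplicative (ZMod n) →* G :=
  AddMonoidHom.toMultiplicativeLeft <| ZMod.lift n
    ⟨zmultiplesHom (Additive G) (Additive.ofMul t), by simpa [← ofMul_pow] using ht⟩

theorem zmodPowersHom_ofAdd_intCast (k : ℤ) :
    zmodPowersHom t ht (ofAdd (k : ZMod n)) = t ^ k := by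
  simp [zmodPowersHom]

@[simp]
theorem zmodPowersHom_ofAdd_one : zmodPowersHom t ht (ofAdd 1) = t := by
  simpa using zmodPowersHom_ofAdd_intCast t ht 1

variable {t ht}

theorem Commute.zmodPowersHom_left {x : G} (h : Commute t x) (y : Multiplicative (ZMod n)) :
    Commute (zmodPowersHom t ht y) x := by
  obtain ⟨k, hk⟩ := ZMod.intCast_surjective (toAdd y)
  rw [← ofAdd_toAdd y, ← hk, zmodPowersHom_ofAdd_intCast]
  exact h.zpow_left k

theorem SemiconjBy.zmodPowersHom {s : G} (h : SemiconjBy s t t⁻¹) (i : ZMod n) :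
    SemiconjBy s (zmodPowersHom t ht (ofAdd i)) (zmodPowersHom t ht (ofAdd (-i))) := by
  obtain ⟨k, rfl⟩ := ZMod.intCast_surjective i
  rw [← Int.cast_neg, zmodPowersHom_ofAdd_intCast, zmodPowersHom_ofAdd_intCast, zpow_neg,
    ← inv_zpow]
  exact h.zpow_right k

end ZModPowers

namespace DihedralGroup

variable {n : ℕ}

theorem hom_ext {f g : DihedralGroup n →* G} (h₀ : f (sr 0) = g (sr 0))
    (h₁ : f (sr 1) = g (sr 1)) : f = g := by
  have hr (i : ZMod n) : f (r i) = g (r i) := by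
    obtain ⟨k, rfl⟩ := ZMod.intCast_surjective i
    rw [← r_one_zpow, ← sub_zero (1 : ZMod n), ← sr_mul_sr, map_zpow, map_zpow, map_mul,
      map_mul, h₀, h₁]
  refine MonoidHom.ext fun
    | r i => hr i
    | sr i => by rw [← zero_add i, ← sr_mul_r, map_mul, map_mul, h₀, hr]

theorem sr_sq (i : ZMod n) : sr i ^ 2 = 1 := by
  rw [sq, sr_mul_self]

variable (s t : G) (hs : s * s = 1) (ht : t ^ n = 1) (hst : s * t * s = t⁻¹)

def lift : DihedralGroup n →* G where
  toFun
    | r i => zmodPowersHom t ht (ofAdd i)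
    | sr i => s * zmodPowersHom t ht (ofAdd i)
  map_one' := by rw [one_def]; exact map_one _
  map_mul' := by
    have hsc : SemiconjBy s t t⁻¹ := by
      rw [SemiconjBy, ← hst, mul_assoc, mul_assoc, hs, mul_one]
    have hP (i : ZMod n) :
        zmodPowersHom t ht (ofAdd i) * s = s * zmodPowersHom t ht (ofAdd (-i)) := by
      simpa only [neg_neg] using (hsc.zmodPowersHom (-i)).eq.symm
    rintro (i | i) (j | j)
    · simp only [r_mul_r, ofAdd_add, map_mul]
    · simp only [r_mul_sr]
      rw [← mul_assoc, hP, mul_assoc, ← map_mul, ← ofAdd_add, neg_add_eq_sub]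
    · simp only [sr_mul_r, ofAdd_add, map_mul, mul_assoc]
    · simp only [sr_mul_sr]
      rw [mul_assoc, ← mul_assoc _ s, hP, ← mul_assoc, ← mul_assoc, hs, one_mul, ← map_mul,
        ← ofAdd_add, neg_add_eq_sub]

@[simp]
theorem lift_sr (i : ZMod n) : lift s t hs ht hst (sr i) = s * zmodPowersHom t ht (ofAdd i) :=
  rfl

variable {s t hs ht hst}

theorem _root_.Commute.dihedralGroupLift_left {x : G} (hsx : Commute s x) (htx : Commute t x)
    (d : DihedralGroup n) : Commute (lift s t hs ht hst d) x := by
  cases d with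
  | r i => exact htx.zmodPowersHom_left (ht := ht) _
  | sr i => exact hsx.mul_left (htx.zmodPowersHom_left (ht := ht) _)

end DihedralGroup

section DihedralProd

variable {m : ℕ} {a b c : G} (ha : a * a = 1) (hb : b * b = 1) (hc : c * c = 1)
  (hab : (a * b) ^ m = 1) (hac : Commute a c) (hbc : Commute b c)

def dihedralProdLift : DihedralGroup m × Multiplicative (ZMod 2) →* G :=
  (DihedralGroup.lift a (a * b) ha hab (mul_mul_mul_eq_inv_of_mul_self_eq_one ha hb)).noncommCoprod
    (zmodPowersHom c (by rwa [sq])) fun d z =>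
      ((hac.dihedralGroupLift_left (hac.mul_left hbc) d).symm.zmodPowersHom_left z).symm

@[simp]
theorem dihedralProdLift_sr_zero : dihedralProdLift ha hb hc hab hac hbc (sr 0, 1) = a := by
  simp [dihedralProdLift]

@[simp]
theorem dihedralProdLift_sr_one : dihedralProdLift ha hb hc hab hac hbc (sr 1, 1) = b := by
  simp [dihedralProdLift, ← mul_assoc, ha]

@[simp]
theorem dihedralProdLift_ofAdd_one :
    dihedralProdLift ha hb hc hab hac hbc (1, ofAdd 1) = c := by
  simp [dihedralProdLift]

end DihedralProd

end

namespace GZ2xZ2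

theorem gA_mul_self : gA * gA = 1 := by
  rw [gA, ← map_mul]
  exact map_one _

theorem gB_mul_self : gB * gB = 1 := by
  rw [gB, ← map_mul]
  exact map_one _

theorem gC_mul_self : gC * gC = 1 := by
  rw [gC, ← map_mul]
  exact map_one _

theorem commute_gB_gC : Commute gB gC := by
  rw [Commute, SemiconjBy, gB, gC, ← map_mul, ← map_mul]
  rfl

def toDihedralProd (m : ℕ) : GZ2xZ2 →* DihedralGroup m × Multiplicative (ZMod 2) :=
  Monoid.Coprod.lift ((MonoidHom.inl _ _).comp (zmodPowersHom (sr 0) (sr_sq 0)))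
    ((zmodPowersHom (sr 1) (sr_sq 1)).prodMap (MonoidHom.id _))

variable (m : ℕ)

@[simp]
theorem toDihedralProd_gA : toDihedralProd m gA = (sr 0, 1) := by
  simp [toDihedralProd, gA]

@[simp]
theorem toDihedralProd_gB : toDihedralProd m gB = (sr 1, 1) := by
  simp [toDihedralProd, gB]

@[simp]
theorem toDihedralProd_gC : toDihedralProd m gC = (1, ofAdd 1) := by
  simp [toDihedralProd, gC]

abbrev relators : Subgroup GZ2xZ2 :=
  Subgroup.normalClosure {gA * gC * gA * gC, (gA * gB) ^ m}

theorem relators_le_ker : relators m ≤ (toDihedralProd m).ker := by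
  refine Subgroup.normalClosure_le_normal ?_
  rintro x (rfl | rfl)
  · simp only [SetLike.mem_coe, MonoidHom.mem_ker, map_mul, toDihedralProd_gA,
      toDihedralProd_gC, Prod.mk_mul_mk, mul_one, sr_mul_sr, sub_self, r_zero, Prod.mk_eq_one,
      true_and]
    rfl
  · simp

variable {m}

theorem mk_mul_self {x : GZ2xZ2} (h : x * x = 1) :
    (x : GZ2xZ2 ⧸ relators m) * x = 1 := by
  rw [← QuotientGroup.mk_mul, h, QuotientGroup.mk_one]

theorem mk_eq_one_of_mem {x : GZ2xZ2} (h : x ∈ ({gA * gC * gA * gC, (gA * gB) ^ m} : Set _)) :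
    (x : GZ2xZ2 ⧸ relators m) = 1 :=
  (QuotientGroup.eq_one_iff x).mpr (Subgroup.subset_normalClosure h)

theorem commute_mk_gA_mk_gC : Commute (gA : GZ2xZ2 ⧸ relators m) gC :=
  commute_of_mul_self_eq_one (mk_mul_self gA_mul_self) (mk_mul_self gC_mul_self)
    (mk_eq_one_of_mem (.inl rfl))

theorem mk_gA_mul_mk_gB_pow : ((gA : GZ2xZ2 ⧸ relators m) * gB) ^ m = 1 :=
  mk_eq_one_of_mem (.inr rfl)

variable (m)

def ofDihedralProd : DihedralGroup m × Multiplicative (ZMod 2) →* GZ2xZ2 ⧸ relators m :=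
  dihedralProdLift (mk_mul_self gA_mul_self) (mk_mul_self gB_mul_self) (mk_mul_self gC_mul_self)
    mk_gA_mul_mk_gB_pow commute_mk_gA_mk_gC (commute_gB_gC.map (QuotientGroup.mk' _))

@[simp]
theorem ofDihedralProd_sr_zero : ofDihedralProd m (sr 0, 1) = gA :=
  dihedralProdLift_sr_zero ..

@[simp]
theorem ofDihedralProd_sr_one : ofDihedralProd m (sr 1, 1) = gB :=
  dihedralProdLift_sr_one ..

@[simp]
theorem ofDihedralProd_ofAdd_one : ofDihedralProd m (1, ofAdd 1) = gC :=
  dihedralProdLift_ofAdd_one ..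

def quotientRelatorsEquiv : GZ2xZ2 ⧸ relators m ≃* DihedralGroup m × Multiplicative (ZMod 2) :=
  MonoidHom.toMulEquiv (QuotientGroup.lift _ (toDihedralProd m) (relators_le_ker m))
    (ofDihedralProd m)
    (by
      refine QuotientGroup.monoidHom_ext _ (Monoid.Coprod.hom_ext ?_ ?_)
      · refine MonoidHom.ext_multiplicative_zmod ?_
        show ofDihedralProd m (toDihedralProd m gA) = gA
        simp
      · refine MonoidHom.prod_ext (MonoidHom.ext_multiplicative_zmod ?_)
          (MonoidHom.ext_multiplicative_zmod ?_)
        · show ofDihedralProd m (toDihedralProd m gB) = gB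
          simp
        · show ofDihedralProd m (toDihedralProd m gC) = gC
          simp)
    (MonoidHom.prod_ext (DihedralGroup.hom_ext (by simp) (by simp))
      (MonoidHom.ext_multiplicative_zmod (by simp)))

end GZ2xZ2

theorem quotient_iso_dihedral_prod_general (n : ℕ) :
    Nonempty
      ((GZ2xZ2 ⧸ Subgroup.normalClosure {gA * gC * gA * gC, (gA * gB) ^ (n + 1)}) ≃*
        DihedralGroup (n + 1) × Multiplicative (ZMod 2)) :=
  ⟨GZ2xZ2.quotientRelatorsEquiv (n + 1)⟩

/-- The quotient of `G' = Z₂ * (Z₂ × Z₂) = ⟨a, b, c | a² = b² = c² = (bc)² = 1⟩` by the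
normal closure of `{acac, (ab)^{n+1}}` is isomorphic to `D_{n+1} × Z₂`. -/
theorem quotient_iso_dihedral_prod (n : ℕ) (hn : 1 ≤ n) :
    Nonempty
      ((GZ2xZ2 ⧸ Subgroup.normalClosure {gA * gC * gA * gC, (gA * gB) ^ (n + 1)}) ≃*
        DihedralGroup (n + 1) × Multiplicative (ZMod 2)) :=
  quotient_iso_dihedral_prod_general n
end

section
/- Let G be a group with a finite normal subgroup T, φ : G → G/T, and let H₁, H₂ be subgroups of G intersecting T trivially such that φ(H₁) ∩ φ(H₂) is a free group of finite rank. Then H₁ ∩ H₂ is free of finite rank and r̄(H₁ ∩ H₂) ≤ |T| · r̄(φ(H₁) ∩ φ(H₂)), where r̄ denotes reduced rank max(0, rank − 1). -/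
/-!
Since `H₁ ∩ T = 1`, the projection `φ` is injective on `H₁ ∩ H₂`; its image `P` has index at most
`|T|` in `Q = φ(H₁) ∩ φ(H₂)`, because lifting `q ∈ Q` to `a ∈ H₁` and `b ∈ H₂`, the label
`a b⁻¹ ∈ T` determines the coset `q P`. So `H₁ ∩ H₂ ≅ P` is free (Nielsen–Schreier) and the
Schreier index formula `r̄(P) ≤ [Q : P] r̄(Q)` gives the bound. That formula comes from a Schreier
transversal `R`, built from positive words in a generating set `S` of `Q` and prefix-closed, so that
`|R| - 1` of the `|R| |S|` Schreier generators are trivial.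
-/

open scoped Pointwise

/-- `R` is the set of values of a prefix-closed set of positive words in `S`. -/
structure IsSchreierSet {G : Type*} [Group G] (S R : Set G) : Prop where
  one_mem : (1 : G) ∈ R
  exists_mul_eq : ∀ r ∈ R, r ≠ 1 → ∃ r' ∈ R, ∃ s ∈ S, r' * s = r

namespace IsSchreierSet
variable {G : Type*} [Group G] {S R : Set G}

theorem insert_mul (hR : IsSchreierSet S R) {r s : G} (hr : r ∈ R) (hs : s ∈ S) :
    IsSchreierSet S (insert (r * s) R) where
  one_mem := Set.mem_insert_of_mem _ hR.one_mem
  exists_mul_eq := by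
    rintro x (rfl | hx) hx1
    · exact ⟨r, Set.mem_insert_of_mem _ hr, s, hs, rfl⟩
    · obtain ⟨r', hr', s', hs', rfl⟩ := hR.exists_mul_eq x hx hx1
      exact ⟨r', Set.mem_insert_of_mem _ hr', s', hs', rfl⟩

end IsSchreierSet

namespace Subgroup

theorem IsComplement.toRightFun_of_mem {G : Type*} [Group G] {H : Subgroup G} {T : Set G}
    (hT : IsComplement (H : Set G) T) {g : G} (hg : g ∈ T) : hT.toRightFun g = ⟨g, hg⟩ :=
  (isComplement_iff_existsUnique_mul_inv_mem.mp hT g).unique (hT.mul_inv_toRightFun_mem g)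
    (by simp [H.one_mem])

variable {G : Type*} [Group G] (H : Subgroup G)

theorem exists_mem_submonoidClosure_mk_eq [H.FiniteIndex] {S : Set G} (hS : closure S = ⊤)
    (g : G) :
    ∃ m ∈ Submonoid.closure S,
      (Quotient.mk'' m : Quotient (QuotientGroup.rightRel H)) = Quotient.mk'' g := by
  let π := QuotientGroup.mk' H.normalCore
  have hπS : closure (π '' S) = ⊤ := by
    rw [← MonoidHom.map_closure, hS, ← MonoidHom.range_eq_map, QuotientGroup.range_mk']
  have hπg : π g ∈ (Submonoid.closure S).map π := by
    rw [MonoidHom.map_mclosure, ← closure_toSubmonoid_of_finite, hπS]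
    exact mem_top _
  obtain ⟨m, hm, hmg⟩ := hπg
  refine ⟨m, hm, Quotient.sound' (QuotientGroup.rightRel_apply.mpr ?_)⟩
  have : m⁻¹ * g ∈ H.normalCore := QuotientGroup.eq.mp hmg
  exact H.normalCore_le (H.normalCore_normal.mem_comm this)

theorem card_le_index_of_injOn [H.FiniteIndex] {R : Finset G}
    (hR : Set.InjOn (Quotient.mk'' : G → Quotient (QuotientGroup.rightRel H)) R) :
    R.card ≤ H.index := by
  let e := QuotientGroup.quotientRightRelEquivQuotientLeftRel H
  have : Finite (Quotient (QuotientGroup.rightRel H)) := Finite.of_equiv _ e.symm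
  rw [← Nat.card_eq_finsetCard, index, ← Nat.card_congr e]
  exact Nat.card_le_card_of_injective _ hR.injective

theorem mk''_mul_right {a b : G}
    (h : (Quotient.mk'' a : Quotient (QuotientGroup.rightRel H)) = Quotient.mk'' b) (s : G) :
    (Quotient.mk'' (a * s) : Quotient (QuotientGroup.rightRel H)) = Quotient.mk'' (b * s) := by
  rw [Quotient.eq'', QuotientGroup.rightRel_apply] at h ⊢
  simpa [mul_assoc] using h

theorem exists_isComplement_isSchreierSet [H.FiniteIndex] {S : Set G} (hS : closure S = ⊤) :
    ∃ R : Finset G, IsComplement (H : Set G) R ∧ IsSchreierSet S R := by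
  classical
  let mk : G → Quotient (QuotientGroup.rightRel H) := Quotient.mk''
  let good (R : Finset G) : Prop := IsSchreierSet S R ∧ Set.InjOn mk R
  let cards : Set ℕ := {n | ∃ R, good R ∧ R.card = n}
  have hbdd : BddAbove cards :=
    ⟨H.index, by rintro _ ⟨R, hR, rfl⟩; exact H.card_le_index_of_injOn hR.2⟩
  have hne : cards.Nonempty := ⟨1, {1}, ⟨⟨by simp, by simp⟩, by simp⟩, rfl⟩
  -- a partial Schreier transversal of maximal size: no coset `H (r * s)` can be missing from it
  obtain ⟨R, ⟨hRS, hRinj⟩, hRcard⟩ := Nat.sSup_mem hne hbdd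
  have hsurj : ∀ m ∈ Submonoid.closure S, ∃ r ∈ R, mk r = mk m := by
    intro m hm
    induction hm using Submonoid.closure_induction_right with
    | one => exact ⟨1, hRS.one_mem, rfl⟩
    | mul_right m _ s hs ih =>
      obtain ⟨r, hr, hrm⟩ := ih
      rw [← show mk (r * s) = mk (m * s) from H.mk''_mul_right hrm s]
      by_contra! hnew
      have hgood : good (insert (r * s) R) := by
        refine ⟨by simpa using hRS.insert_mul hr hs, ?_⟩
        rw [Finset.coe_insert, Set.injOn_insert (fun h => hnew _ h rfl)]
        exact ⟨hRinj, fun ⟨r', hr', h⟩ => hnew r' hr' h⟩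
      have := le_csSup hbdd ⟨_, hgood, rfl⟩
      rw [Finset.card_insert_of_notMem (fun h => hnew _ h rfl)] at this
      omega
  refine ⟨R, ?_, hRS⟩
  rw [isComplement_subgroup_left_iff_existsUnique_quotientMk'']
  intro q
  induction q using Quotient.inductionOn' with | h g =>
  obtain ⟨m, hm, hmg⟩ := H.exists_mem_submonoidClosure_mk_eq hS g
  obtain ⟨r, hr, hrg⟩ : ∃ r ∈ R, mk r = mk g := by
    obtain ⟨r, hr, hrm⟩ := hsurj m hm
    exact ⟨r, hr, hrm.trans hmg⟩
  exact ⟨⟨r, hr⟩, hrg, fun r' hr' => Subtype.ext (hRinj r'.2 hr (hr'.trans hrg.symm))⟩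

theorem exists_finset_card_add_index_le [H.FiniteIndex] {S : Finset G}
    (hS : closure (S : Set G) = ⊤) :
    ∃ T : Finset H, T.card + H.index ≤ H.index * S.card + 1 ∧ closure (T : Set H) = ⊤ := by
  classical
  obtain ⟨R, hR, hRS⟩ := H.exists_isComplement_isSchreierSet hS
  let f : G → H := fun g => ⟨g * (hR.toRightFun g : G)⁻¹, hR.mul_inv_toRightFun_mem g⟩
  have hf : ∀ g ∈ R, f g = 1 := fun g hg => by
    simp [f, hR.toRightFun_of_mem (Finset.mem_coe.mpr hg)]
  have htree : R.erase 1 ⊆ R * S := fun r hr => by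
    obtain ⟨hr1, hr⟩ := Finset.mem_erase.mp hr
    obtain ⟨r', hr', s, hs, rfl⟩ := hRS.exists_mul_eq r hr hr1
    exact Finset.mul_mem_mul hr' hs
  refine ⟨((R * S) \ R.erase 1).image f, ?_, ?_⟩
  · have hRcard : R.card = H.index := by simpa using hR.ncard_right
    have hRS_card : (R * S).card ≤ H.index * S.card := hRcard ▸ Finset.card_mul_le
    have htree_card := Finset.card_le_card htree
    have hgens : (((R * S) \ R.erase 1).image f).card ≤ (R * S).card - (R.erase 1).card :=
      Finset.card_sdiff_of_subset htree ▸ Finset.card_image_le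
    rw [Finset.card_erase_of_mem hRS.one_mem, hRcard] at htree_card hgens
    omega
  · rw [eq_top_iff, ← closure_mul_image_eq_top' hR hRS.one_mem hS, closure_le]
    intro x hx
    obtain ⟨g, hg, rfl⟩ := Finset.mem_image.mp hx
    change f g ∈ ((closure _ : Subgroup H) : Set H)
    by_cases hg' : g ∈ R.erase 1
    · rw [show f g = 1 from hf g (Finset.mem_of_mem_erase hg')]
      exact one_mem _
    · exact subset_closure (Finset.mem_image_of_mem f (Finset.mem_sdiff.mpr ⟨hg, hg'⟩))

theorem rank_sub_one_le_index_mul [Group.FG G] [H.FiniteIndex] :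
    Group.rank H - 1 ≤ H.index * (Group.rank G - 1) := by
  obtain ⟨S, hS_card, hS⟩ := Group.rank_spec G
  obtain ⟨T, hT_card, hT⟩ := H.exists_finset_card_add_index_le hS
  have := Group.rank_le hT
  rw [Nat.mul_sub_one, ← hS_card]
  omega

end Subgroup

namespace MonoidHom
variable {G G' : Type*} [Group G] [Group G'] (f : G →* G') (H₁ H₂ : Subgroup G)

def restrictInf : ↥(H₁ ⊓ H₂) →* ↥(H₁.map f ⊓ H₂.map f) :=
  (f.domRestrict (H₁ ⊓ H₂)).codRestrict _ fun x =>
    ⟨Subgroup.mem_map_of_mem f x.2.1, Subgroup.mem_map_of_mem f x.2.2⟩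

theorem injective_restrictInf {H₁ : Subgroup G} (h : H₁ ⊓ f.ker = ⊥) :
    Function.Injective (f.restrictInf H₁ H₂) := by
  rw [← ker_eq_bot_iff, eq_bot_iff]
  intro x hx
  have hx' : (x : G) ∈ H₁ ⊓ f.ker := ⟨x.2.1, congrArg Subtype.val hx⟩
  rw [h] at hx'
  exact Subtype.ext hx'

theorem exists_injective_quotient_range_restrictInf :
    ∃ ι : ↥(H₁.map f ⊓ H₂.map f) ⧸ (f.restrictInf H₁ H₂).range → f.ker,
      Function.Injective ι := by
  have hlift (q : ↥(H₁.map f ⊓ H₂.map f)) : ∃ a ∈ H₁, ∃ b ∈ H₂, f a = q ∧ f b = q := by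
    obtain ⟨a, ha, hfa⟩ := q.2.1
    obtain ⟨b, hb, hfb⟩ := q.2.2
    exact ⟨a, ha, b, hb, hfa, hfb⟩
  choose a ha b hb hfa hfb using hlift
  let label (q : ↥(H₁.map f ⊓ H₂.map f)) : f.ker :=
    ⟨a q * (b q)⁻¹, by rw [mem_ker, map_mul, map_inv, hfa, hfb, mul_inv_cancel]⟩
  have hlabel (q q') (h : label q = label q') : q⁻¹ * q' ∈ (f.restrictInf H₁ H₂).range := by
    have hab : (a q)⁻¹ * a q' = (b q)⁻¹ * b q' := by
      have := congrArg Subtype.val h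
      simp only [label] at this
      rw [inv_mul_eq_iff_eq_mul, ← mul_assoc, ← mul_inv_eq_iff_eq_mul, ← this]
    refine ⟨⟨(a q)⁻¹ * a q', H₁.mul_mem (H₁.inv_mem (ha q)) (ha q'), ?_⟩, Subtype.ext ?_⟩
    · rw [hab]; exact H₂.mul_mem (H₂.inv_mem (hb q)) (hb q')
    · change f ((a q)⁻¹ * a q') = (q : G')⁻¹ * q'
      rw [map_mul, map_inv, hfa, hfa]
  refine ⟨fun c => label c.out, fun c c' h => ?_⟩
  rw [← QuotientGroup.out_eq' c, ← QuotientGroup.out_eq' c']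
  exact QuotientGroup.eq.mpr (hlabel _ _ h)

end MonoidHom

theorem reduced_rank_inter_le_card_mul_general {G : Type*} [Group G] (T : Subgroup G) [T.Normal]
    [Finite T] (H₁ H₂ : Subgroup G) (h₁ : H₁ ⊓ T = ⊥)
    [IsFreeGroup ↥(H₁.map (QuotientGroup.mk' T) ⊓ H₂.map (QuotientGroup.mk' T))]
    [Group.FG ↥(H₁.map (QuotientGroup.mk' T) ⊓ H₂.map (QuotientGroup.mk' T))] :
    ∃ (_ : IsFreeGroup ↥(H₁ ⊓ H₂)) (hfg : Group.FG ↥(H₁ ⊓ H₂)),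
      @Group.rank _ _ hfg - 1 ≤
        Nat.card T *
          (Group.rank ↥(H₁.map (QuotientGroup.mk' T) ⊓ H₂.map (QuotientGroup.mk' T)) - 1) := by
  set φ := QuotientGroup.mk' T
  have hker : φ.ker = T := QuotientGroup.ker_mk' T
  set P := (φ.restrictInf H₁ H₂).range
  let e : ↥(H₁ ⊓ H₂) ≃* P := MonoidHom.ofInjective (φ.injective_restrictInf H₂ (by rwa [hker]))
  obtain ⟨ι, hι⟩ := φ.exists_injective_quotient_range_restrictInf H₁ H₂
  have : Finite φ.ker := by rwa [hker]
  have : Finite (_ ⧸ P) := Finite.of_injective ι hι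
  have : P.FiniteIndex := Subgroup.finiteIndex_of_finite_quotient
  have hindex : P.index ≤ Nat.card T := (Nat.card_le_card_of_injective ι hι).trans_eq
    (Nat.card_congr (MulEquiv.subgroupCongr hker).toEquiv)
  have : Group.FG ↥(H₁ ⊓ H₂) :=
    Group.fg_of_surjective (f := e.symm.toMonoidHom) e.symm.surjective
  refine ⟨IsFreeGroup.ofMulEquiv e.symm, this, ?_⟩
  calc Group.rank ↥(H₁ ⊓ H₂) - 1 = Group.rank P - 1 := by rw [Group.rank_congr e]
    _ ≤ P.index * (Group.rank _ - 1) := P.rank_sub_one_le_index_mul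
    _ ≤ _ := Nat.mul_le_mul_right _ hindex

/-- Let `T` be a finite normal subgroup of `G`, `φ : G → G/T`, and `H₁`, `H₂` subgroups
intersecting `T` trivially with `φ(H₁) ∩ φ(H₂)` free of finite rank. Then `H₁ ∩ H₂`
is free of finite rank and `r̄(H₁ ∩ H₂) ≤ |T| ⬝ r̄(φ(H₁) ∩ φ(H₂))`, with
`r̄ = rank - 1` (truncated subtraction). -/
theorem reduced_rank_inter_le_card_mul {G : Type*} [Group G] (T : Subgroup G) [T.Normal]
    [Finite T] (H₁ H₂ : Subgroup G) (h₁ : H₁ ⊓ T = ⊥) (h₂ : H₂ ⊓ T = ⊥)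
    [IsFreeGroup ↥(H₁.map (QuotientGroup.mk' T) ⊓ H₂.map (QuotientGroup.mk' T))]
    [Group.FG ↥(H₁.map (QuotientGroup.mk' T) ⊓ H₂.map (QuotientGroup.mk' T))] :
    ∃ (_ : IsFreeGroup ↥(H₁ ⊓ H₂)) (hfg : Group.FG ↥(H₁ ⊓ H₂)),
      @Group.rank _ _ hfg - 1 ≤
        Nat.card T *
          (Group.rank ↥(H₁.map (QuotientGroup.mk' T) ⊓ H₂.map (QuotientGroup.mk' T)) - 1) :=
  reduced_rank_inter_le_card_mul_general T H₁ H₂ h₁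
end
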